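/- arXiv:2007.02917 — 6 statements merged into one kernel-verified Lean document; each statement's English description precedes it below -/
import Mathlib

section
/- Consider the system (𝕋², m_{𝕋²}, T) where T(x,y) = (x, y+x). For the generating algebra 𝓕 := {functions depending only on the second coordinate, i.e. of the form (x,y) ↦ g(y) with g ∈ L^∞(m_𝕋)}, and for every r ∈ ℕ, ℓ ∈ ℕ, n_1,…,n_ℓ ∈ ℤ, and f_1,…,f_ℓ ∈ 𝓕: ∫_{𝕋²} ∏_{j=1}^ℓ f_j(T^{n_j}(x,y)) dm_{𝕋²}(x,y) = ∫_{𝕋²} ∏_{j=1}^ℓ f_j(T^{r·n_j}(x,y)) dm_{𝕋²}(x,y). -/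
open MeasureTheory

/-- strong stationarity for `T(x,y) = (x, y+x)` on `𝕋²` with Haar measure,
for the generating algebra of bounded measurable functions of the second coordinate:
since `T^n(x,y) = (x, y + n•x)`, for all `r ∈ ℕ`, `n_1,…,n_ℓ ∈ ℤ`, and `f_j(x,y) = g_j(y)`,
`∫ ∏_j f_j(T^{n_j}(x,y)) dm_{𝕋²} = ∫ ∏_j f_j(T^{r n_j}(x,y)) dm_{𝕋²}`. -/
theorem stmt8 (ℓ : ℕ) (g : Fin ℓ → AddCircle (1 : ℝ) → ℂ)
    (hgm : ∀ j, Measurable (g j)) (C : ℝ) (hgb : ∀ j z, ‖g j z‖ ≤ C)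
    (f : Fin ℓ → AddCircle (1 : ℝ) × AddCircle (1 : ℝ) → ℂ)
    (hf : ∀ j p, f j p = g j p.2)
    (Tpow : ℤ → AddCircle (1 : ℝ) × AddCircle (1 : ℝ) → AddCircle (1 : ℝ) × AddCircle (1 : ℝ))
    (hT : ∀ (n : ℤ) (p : AddCircle (1 : ℝ) × AddCircle (1 : ℝ)),
      Tpow n p = (p.1, p.2 + n • p.1))
    (r : ℕ) (hr : 0 < r) (nn : Fin ℓ → ℤ) :
    ∫ p : AddCircle (1 : ℝ) × AddCircle (1 : ℝ), ∏ j, f j (Tpow (nn j) p) ∂(volume.prod volume)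
      = ∫ p : AddCircle (1 : ℝ) × AddCircle (1 : ℝ),
          ∏ j, f j (Tpow ((r : ℤ) * nn j) p) ∂(volume.prod volume) := by
  have hrz : ((r : ℤ)) ≠ 0 := by exact_mod_cast hr.ne'
  have hsmul : MeasurePreserving (fun x : AddCircle (1 : ℝ) => (r : ℤ) • x) volume volume :=
    MeasureTheory.Measure.measurePreserving_zsmul volume hrz
  have hφ : MeasurePreserving
      (fun p : AddCircle (1 : ℝ) × AddCircle (1 : ℝ) => ((r : ℤ) • p.1, p.2))
      (volume.prod volume) (volume.prod volume) :=
    hsmul.prod (MeasurePreserving.id volume)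
  -- the left integrand as a function
  set F : AddCircle (1 : ℝ) × AddCircle (1 : ℝ) → ℂ :=
    fun p => ∏ j, g j (p.2 + nn j • p.1) with hF
  have hFm : Measurable F := by
    apply Finset.measurable_prod
    intro j _
    exact (hgm j).comp (measurable_snd.add ((measurable_const_smul (nn j)).comp measurable_fst))
  have h1 : (fun p : AddCircle (1 : ℝ) × AddCircle (1 : ℝ) => ∏ j, f j (Tpow (nn j) p)) = F := by
    funext p
    simp only [hF, hf, hT]
  have h2 : (fun p : AddCircle (1 : ℝ) × AddCircle (1 : ℝ) =>
      ∏ j, f j (Tpow ((r : ℤ) * nn j) p))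
      = F ∘ (fun p : AddCircle (1 : ℝ) × AddCircle (1 : ℝ) => ((r : ℤ) • p.1, p.2)) := by
    funext p
    simp only [hF, hf, hT, Function.comp]
    refine Finset.prod_congr rfl fun j _ => ?_
    congr 1
    rw [smul_smul, mul_comm]
  rw [h1, h2]
  have hFsm : AEStronglyMeasurable F
      (Measure.map (fun p : AddCircle (1 : ℝ) × AddCircle (1 : ℝ) => ((r : ℤ) • p.1, p.2))
        (volume.prod volume)) := by
    rw [hφ.map_eq]; exact hFm.aestronglyMeasurable
  conv_lhs => rw [← hφ.map_eq]
  rw [integral_map hφ.measurable.aemeasurable hFsm]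
  rfl
end

section
/- Let a : ℕ → ℝ satisfy: a(n) → +∞, a(n+1) − a(n) → 0, and for every r ∈ (0,1), sup_{s ∈ [rn, n]} |a(n) − a(s)| → 0 as n → ∞ (s ranging over integers). Suppose (N_k) is a sequence with N_k → ∞ and {a(N_k)} → α ∈ (0,1). Then the averages of Dirac masses (1/N_k) ∑_{n=1}^{N_k} δ_{{a(n)}} converge weak-star to the point mass δ_α on [0,1]. -/
open Filter Finset Topology

/-!
Continuity of `f` at `α` and the 1-periodicity of `f ∘ Int.fract` show that `f {a n}` is close to
`f α` for every `n ∈ [r N_k, N_k]` once `{a N_k}` is close to `α`: there `a n` differs from `a N_k`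
by little, so `a n - ⌊a N_k⌋` is close to `α`. The remaining indices `n < r N_k` are at most
`r N_k` in number and `f` is bounded on `[0, 1]`, so they shift the average by `O(r)`; letting
`r → 0` gives the limit `f α`.
-/

lemma card_filter_Icc_natCast_lt_le (N : ℕ) {x : ℝ} (hx : 0 ≤ x) :
    (#{n ∈ Icc 1 N | ((n : ℕ) : ℝ) < x} : ℝ) ≤ x := by
  have hsub : {n ∈ Icc 1 N | ((n : ℕ) : ℝ) < x} ⊆ Ico 1 ⌈x⌉₊ := by
    intro n hn
    simp only [mem_filter, mem_Icc] at hn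
    exact mem_Ico.2 ⟨hn.1.1, Nat.lt_ceil.2 hn.2⟩
  calc (#{n ∈ Icc 1 N | ((n : ℕ) : ℝ) < x} : ℝ) ≤ #(Ico 1 ⌈x⌉₊) := by
        exact_mod_cast card_le_card hsub
    _ ≤ x := by
      rw [Nat.card_Ico]
      rcases Nat.eq_zero_or_pos ⌈x⌉₊ with h | h
      · simp [h, hx]
      · rw [Nat.cast_sub h, Nat.cast_one]
        linarith [Nat.ceil_lt_add_one hx]

lemma abs_inv_mul_sum_Icc_sub_le {u : ℕ → ℝ} {c B ε r : ℝ} {N : ℕ} (hN : N ≠ 0)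
    (hr₀ : 0 ≤ r) (hr₁ : r ≤ 1) (hB : ∀ n, |u n - c| ≤ B)
    (hε : ∀ n : ℕ, r * N ≤ n → n ≤ N → |u n - c| ≤ ε) :
    |(N : ℝ)⁻¹ * ∑ n ∈ Icc 1 N, u n - c| ≤ ε + r * B := by
  have hNpos : (0 : ℝ) < N := by exact_mod_cast Nat.pos_of_ne_zero hN
  have hε₀ : 0 ≤ ε := (abs_nonneg _).trans (hε N (by nlinarith) le_rfl)
  have hB₀ : 0 ≤ B := (abs_nonneg _).trans (hB 0)
  have hpoint : ∀ n ∈ Icc 1 N, |u n - c| ≤ ε + if (n : ℝ) < r * N then B else 0 := by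
    intro n hn
    split_ifs with h
    · linarith [hB n]
    · simpa using hε n (not_lt.1 h) (mem_Icc.1 hn).2
  have hsum : |∑ n ∈ Icc 1 N, (u n - c)| ≤ N * (ε + r * B) :=
    calc |∑ n ∈ Icc 1 N, (u n - c)| ≤ ∑ n ∈ Icc 1 N, |u n - c| := abs_sum_le_sum_abs _ _
      _ ≤ ∑ n ∈ Icc 1 N, (ε + if (n : ℝ) < r * N then B else 0) := sum_le_sum hpoint
      _ = N * ε + #{n ∈ Icc 1 N | ((n : ℕ) : ℝ) < r * N} * B := by
        rw [sum_add_distrib, ← sum_filter]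
        simp [nsmul_eq_mul]
      _ ≤ N * ε + r * N * B := by
        gcongr
        exact card_filter_Icc_natCast_lt_le N (by positivity)
      _ = N * (ε + r * B) := by ring
  have hcard : ((#(Icc 1 N) : ℕ) : ℝ) = N := by simp
  rw [sum_sub_distrib, sum_const, nsmul_eq_mul, hcard] at hsum
  have hfactor : (N : ℝ)⁻¹ * ∑ n ∈ Icc 1 N, u n - c = (N : ℝ)⁻¹ * (∑ n ∈ Icc 1 N, u n - N * c) := by
    field_simp
  rw [hfactor, abs_mul, abs_inv, abs_of_pos hNpos, inv_mul_le_iff₀ hNpos]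
  exact hsum

theorem tendsto_inv_mul_sum_Icc_of_tail {ι : Type*} {l : Filter ι} {u : ℕ → ℝ} {c B : ℝ}
    (hB : ∀ n, |u n - c| ≤ B) {N : ι → ℕ} (hN : ∀ᶠ k in l, N k ≠ 0)
    (htail : ∀ r ∈ Set.Ioo (0 : ℝ) 1, ∀ ε > 0, ∀ᶠ k in l,
      ∀ n : ℕ, r * N k ≤ n → n ≤ N k → |u n - c| < ε) :
    Tendsto (fun k => (N k : ℝ)⁻¹ * ∑ n ∈ Icc 1 (N k), u n) l (𝓝 c) := by
  rw [Metric.tendsto_nhds]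
  intro ε hε
  have hsmall : ∀ᶠ r in 𝓝[>] (0 : ℝ), r < 1 ∧ r * B < ε / 2 := by
    refine nhdsWithin_le_nhds ((eventually_lt_nhds one_pos).and ?_)
    exact ((continuous_mul_const B).tendsto' 0 0 (zero_mul B)).eventually
      (gt_mem_nhds (half_pos hε))
  obtain ⟨r, ⟨hr₁, hrB⟩, hr₀⟩ := (hsmall.and self_mem_nhdsWithin).exists
  filter_upwards [htail r ⟨hr₀, hr₁⟩ (ε / 2) (half_pos hε), hN] with k hk hNk
  rw [Real.dist_eq]
  calc _ ≤ ε / 2 + r * B := abs_inv_mul_sum_Icc_sub_le hNk (le_of_lt hr₀) hr₁.le hB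
          fun n h₁ h₂ => (hk n h₁ h₂).le
    _ < ε := by linarith

lemma continuousAt_comp_fract {f : ℝ → ℝ} {α : ℝ} (hf : ContinuousWithinAt f (Set.Icc 0 1) α)
    (hα : α ∈ Set.Ioo (0 : ℝ) 1) : ContinuousAt (f ∘ Int.fract) α := by
  have hfract : ContinuousAt Int.fract α := by
    refine continuousAt_id.congr ?_
    filter_upwards [Ioo_mem_nhds hα.1 hα.2] with x hx
    exact (Int.fract_eq_self.2 ⟨hx.1.le, hx.2⟩).symm
  rw [← continuousWithinAt_univ]
  refine ContinuousWithinAt.comp (t := Set.Icc 0 1) ?_ hfract.continuousWithinAt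
    fun x _ => ⟨Int.fract_nonneg x, (Int.fract_lt_one x).le⟩
  rwa [Int.fract_eq_self.2 ⟨hα.1.le, hα.2⟩]

/-- Since `a n - ⌊a (N k)⌋ = {a (N k)} + (a n - a (N k))`, periodicity replaces `a n` by a point
close to `α`. -/
lemma eventually_abs_periodic_sub_lt {ι : Type*} {l : Filter ι} {h : ℝ → ℝ}
    (hper : Function.Periodic h 1) {α : ℝ} (hcont : ContinuousAt h α) {a : ℕ → ℝ} {N : ι → ℕ}
    {r : ℝ} (hflat : ∀ η > 0, ∀ᶠ k in l, ∀ n : ℕ, r * N k ≤ n → n ≤ N k → |a (N k) - a n| < η)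
    (hfr : Tendsto (fun k => Int.fract (a (N k))) l (𝓝 α)) :
    ∀ ε > 0, ∀ᶠ k in l, ∀ n : ℕ, r * N k ≤ n → n ≤ N k → |h (a n) - h α| < ε := by
  intro ε hε
  obtain ⟨δ, hδ, hδh⟩ := Metric.continuousAt_iff.mp hcont ε hε
  filter_upwards [hflat (δ / 2) (half_pos hδ), Metric.tendsto_nhds.mp hfr (δ / 2) (half_pos hδ)]
    with k hk hfk n hn₁ hn₂
  have hshift : a n - ⌊a (N k)⌋ * 1 = Int.fract (a (N k)) + (a n - a (N k)) := by
    rw [Int.fract]; ring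
  rw [← Real.dist_eq, ← hper.sub_int_mul_eq ⌊a (N k)⌋, hshift]
  apply hδh
  rw [Real.dist_eq] at hfk ⊢
  calc |Int.fract (a (N k)) + (a n - a (N k)) - α|
      ≤ |Int.fract (a (N k)) - α| + |a (N k) - a n| := by
        rw [abs_sub_comm (a (N k))]
        exact (abs_add_le _ _).trans_eq' (by ring_nf)
    _ < δ := by linarith [hk n hn₁ hn₂]

theorem stmt11_general (a : ℕ → ℝ)
    (hsup : ∀ r ∈ Set.Ioo (0:ℝ) 1, ∀ ε > 0, ∀ᶠ n : ℕ in atTop,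
      ∀ s : ℕ, r * n ≤ (s : ℝ) → s ≤ n → |a n - a s| < ε)
    (Nk : ℕ → ℕ) (hNk : Tendsto Nk atTop atTop)
    (α : ℝ) (hα : α ∈ Set.Ioo (0:ℝ) 1)
    (hfr : Tendsto (fun k => Int.fract (a (Nk k))) atTop (nhds α)) :
    ∀ f : ℝ → ℝ, ContinuousOn f (Set.Icc 0 1) →
      Tendsto (fun k => (Nk k : ℝ)⁻¹ * ∑ n ∈ Finset.Icc 1 (Nk k), f (Int.fract (a n)))
        atTop (nhds (f α)) := by
  intro f hf
  obtain ⟨C, hC⟩ := isCompact_Icc.exists_bound_of_continuousOn hf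
  have hbound : ∀ n, |f (Int.fract (a n)) - f α| ≤ C + C := fun n =>
    (abs_sub _ _).trans <| add_le_add
      (hC _ ⟨Int.fract_nonneg _, (Int.fract_lt_one _).le⟩) (hC α (Set.Ioo_subset_Icc_self hα))
  have hcont := continuousAt_comp_fract (hf α (Set.Ioo_subset_Icc_self hα)) hα
  have hfα : (f ∘ Int.fract) α = f α := by
    simp only [Function.comp, Int.fract_eq_self.2 ⟨hα.1.le, hα.2⟩]
  refine tendsto_inv_mul_sum_Icc_of_tail hbound (hNk.eventually_ne_atTop 0) fun r hr ε hε => ?_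
  have := eventually_abs_periodic_sub_lt ((Int.fract_periodic ℝ).comp f) hcont
    (fun η hη => hNk.eventually (hsup r hr η hη)) hfr ε hε
  simpa only [hfα, Function.comp_apply] using this

/-- If `a(n) → ∞`, consecutive gaps tend to `0`, `a` is asymptotically
constant on intervals `[rn, n]`, and `{a(N_k)} → α ∈ (0,1)` along `N_k → ∞`, then the
empirical measures `(1/N_k) ∑_{n≤N_k} δ_{{a(n)}}` converge weak-star to `δ_α`. -/
theorem stmt11 (a : ℕ → ℝ)
    (hinf : Tendsto (fun n : ℕ => a n) atTop atTop)
    (hgap : Tendsto (fun n : ℕ => a (n + 1) - a n) atTop (nhds 0))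
    (hsup : ∀ r ∈ Set.Ioo (0:ℝ) 1, ∀ ε > 0, ∀ᶠ n : ℕ in atTop,
      ∀ s : ℕ, r * n ≤ (s : ℝ) → s ≤ n → |a n - a s| < ε)
    (Nk : ℕ → ℕ) (hNk : Tendsto Nk atTop atTop)
    (α : ℝ) (hα : α ∈ Set.Ioo (0:ℝ) 1)
    (hfr : Tendsto (fun k => Int.fract (a (Nk k))) atTop (nhds α)) :
    ∀ f : ℝ → ℝ, ContinuousOn f (Set.Icc 0 1) →
      Tendsto (fun k => (Nk k : ℝ)⁻¹ * ∑ n ∈ Finset.Icc 1 (Nk k), f (Int.fract (a n)))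
        atTop (nhds (f α)) :=
  stmt11_general a hsup Nk hNk α hα hfr
end

section
/- Let a : ℕ → 𝕊¹ (unit circle in ℂ) satisfy a(n+1)/a(n) → 1 and suppose the orbit {a(n) : n ∈ ℕ} is dense in 𝕊¹, and for every r ∈ (0,1), lim_{N→∞} sup_{n ∈ [rN, N]} |a(n) − a(N)| → 0 as r → 1⁻ (uniformly). Then the Cesàro averages (1/N) ∑_{n=1}^N a(n) do not converge as N → ∞. -/
/-!
If the Cesàro averages `A N` converged to `L`, then so would the averages over the windows
`(⌈rN⌉, N]`, since `(s N - s M) / (N - M) = (A N - (M / N) A M) / (1 - M / N)` with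
`M / N → r < 1`. For `r` close to `1` the sequence is almost constant on such a window, so
`a N → L`. The closure of the range of a convergent sequence is countable, hence totally
disconnected, and cannot contain the connected circle.
-/

open Filter Topology Finset

theorem sum_Icc_one_sub_sum_Icc_one {M : Type*} [AddCommGroup M] {f : ℕ → M} {m n : ℕ}
    (hmn : m ≤ n) :
    ∑ k ∈ Icc 1 n, f k - ∑ k ∈ Icc 1 m, f k = ∑ k ∈ Ioc m n, f k := by
  have hIcc (k : ℕ) : Icc 1 k = Ioc 0 k := Icc_add_one_left_eq_Ioc 0 k
  rw [hIcc, hIcc, sub_eq_iff_eq_add', sum_Ioc_consecutive f m.zero_le hmn]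

section

variable {E : Type*} [NormedAddCommGroup E] [NormedSpace ℝ E]

theorem norm_inv_card_smul_sum_sub_le {ι : Type*} {t : Finset ι} (ht : t.Nonempty) {f : ι → E}
    {x : E} {ε : ℝ} (h : ∀ i ∈ t, ‖f i - x‖ ≤ ε) : ‖(#t : ℝ)⁻¹ • ∑ i ∈ t, f i - x‖ ≤ ε := by
  have hmem := (convex_closedBall x ε).centerMass_mem (t := t) (w := fun _ => (1 : ℝ))
    (fun _ _ => zero_le_one) (by simpa using ht) (fun i hi => mem_closedBall_iff_norm.2 (h i hi))
  simpa [Finset.centerMass, Metric.mem_closedBall, dist_eq_norm] using hmem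

theorem tendsto_natCeil_mul_div_natCast {r : ℝ} (hr : 0 ≤ r) :
    Tendsto (fun N : ℕ => (⌈r * N⌉₊ : ℝ) / N) atTop (𝓝 r) :=
  (tendsto_nat_ceil_mul_div_atTop hr).comp tendsto_natCast_atTop_atTop

theorem tendsto_inv_smul_sub_ceil_mul {s : ℕ → E} {L : E} {r : ℝ} (hr : r ∈ Set.Ioo 0 1)
    (hs : Tendsto (fun N : ℕ => (N : ℝ)⁻¹ • s N) atTop (𝓝 L)) :
    Tendsto (fun N : ℕ => ((N : ℝ) - ⌈r * N⌉₊)⁻¹ • (s N - s ⌈r * N⌉₊)) atTop (𝓝 L) := by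
  have hq := tendsto_natCeil_mul_div_natCast hr.1.le
  have hM : Tendsto (fun N : ℕ => ⌈r * N⌉₊) atTop atTop :=
    tendsto_nat_ceil_atTop.comp (tendsto_natCast_atTop_atTop.const_mul_atTop hr.1)
  have h1r : 1 - r ≠ 0 := sub_ne_zero.2 hr.2.ne'
  have hlim := ((tendsto_const_nhds.sub hq).inv₀ h1r).smul (hs.sub (hq.smul (hs.comp hM)))
  have hL : (1 - r)⁻¹ • (L - r • L) = L := by
    rw [show L - r • L = (1 - r) • L by rw [sub_smul, one_smul], smul_smul, inv_mul_cancel₀ h1r,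
      one_smul]
  rw [hL] at hlim
  refine hlim.congr' ?_
  filter_upwards [eventually_gt_atTop 0, hM.eventually_gt_atTop 0] with N hN hMN
  simp only [Function.comp_apply, smul_sub, smul_smul]
  congr 2 <;> field_simp

theorem tendsto_of_tendsto_inv_smul_sum_Icc {a : ℕ → E} {L : E}
    (hunif : ∀ ε > 0, ∃ r ∈ Set.Ioo (0:ℝ) 1, ∀ᶠ N : ℕ in atTop,
      ∀ n : ℕ, r * N ≤ (n : ℝ) → n ≤ N → ‖a n - a N‖ < ε)
    (havg : Tendsto (fun N : ℕ => (N : ℝ)⁻¹ • ∑ n ∈ Icc 1 N, a n) atTop (𝓝 L)) :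
    Tendsto a atTop (𝓝 L) := by
  refine Metric.tendsto_nhds.2 fun ε hε => ?_
  obtain ⟨r, hr, hclose⟩ := hunif (ε / 2) (half_pos hε)
  have hwindow := Metric.tendsto_nhds.1 (tendsto_inv_smul_sub_ceil_mul hr havg) (ε / 2)
    (half_pos hε)
  have hlt : ∀ᶠ N : ℕ in atTop, ⌈r * N⌉₊ < N := by
    filter_upwards [eventually_gt_atTop 0,
      (tendsto_natCeil_mul_div_natCast hr.1.le).eventually (gt_mem_nhds hr.2)] with N hN hq
    exact_mod_cast (div_lt_one (by positivity)).1 hq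
  filter_upwards [hclose, hwindow, hlt] with N hclose hwindow hlt
  rw [sum_Icc_one_sub_sum_Icc_one hlt.le, ← Nat.cast_sub hlt.le, ← Nat.card_Ioc] at hwindow
  have hnear : ‖(#(Ioc ⌈r * N⌉₊ N) : ℝ)⁻¹ • ∑ n ∈ Ioc ⌈r * N⌉₊ N, a n - a N‖ ≤ ε / 2 :=
    norm_inv_card_smul_sum_sub_le (nonempty_Ioc.2 hlt) fun n hn =>
      (hclose n ((Nat.le_ceil _).trans (by exact_mod_cast (mem_Ioc.1 hn).1.le))
        (mem_Ioc.1 hn).2).le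
  calc dist (a N) L
      ≤ dist (a N) _ + dist _ L := dist_triangle _ _ _
    _ < ε / 2 + ε / 2 := by
        rw [dist_comm, dist_eq_norm]
        exact add_lt_add_of_le_of_lt hnear hwindow
    _ = ε := add_halves ε

end

theorem Filter.Tendsto.not_subset_closure_range {X : Type*} [MetricSpace X] {a : ℕ → X} {L : X}
    (ha : Tendsto a atTop (𝓝 L)) {s : Set X} (hs : IsPreconnected s) (hs' : s.Nontrivial) :
    ¬ s ⊆ closure (Set.range a) := by
  intro hsub
  have hclosure : closure (Set.range a) ⊆ insert L (Set.range a) :=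
    closure_minimal (Set.subset_insert _ _) ha.isCompact_insert_range.isClosed
  have hcount : s.Countable := ((Set.countable_range a).insert L).mono (hsub.trans hclosure)
  exact hs'.not_subsingleton (hcount.isTotallyDisconnected s subset_rfl hs)

theorem stmt12_general (a : ℕ → ℂ)
    (hdense : ∀ z : ℂ, ‖z‖ = 1 → z ∈ closure (Set.range a))
    (hunif : ∀ ε > 0, ∃ r ∈ Set.Ioo (0:ℝ) 1, ∀ᶠ N : ℕ in atTop,
      ∀ n : ℕ, r * N ≤ (n : ℝ) → n ≤ N → ‖a n - a N‖ < ε) :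
    ¬ ∃ L : ℂ, Tendsto (fun N : ℕ => (N : ℂ)⁻¹ * ∑ n ∈ Finset.Icc 1 N, a n)
      atTop (nhds L) := by
  rintro ⟨L, havg⟩
  have ha : Tendsto a atTop (𝓝 L) :=
    tendsto_of_tendsto_inv_smul_sum_Icc hunif (by simpa [Complex.real_smul] using havg)
  refine ha.not_subset_closure_range (isPreconnected_sphere (by simp) 0 1)
    ⟨1, by simp, -1, by simp, by norm_num⟩ fun z hz => hdense z ?_
  simpa using hz

/-- If `a : ℕ → 𝕊¹` satisfies `a(n+1)/a(n) → 1`, has dense orbit in the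
unit circle, and is asymptotically constant on intervals `[rN, N]` as `r → 1⁻`, then its
Cesàro averages do not converge. -/
theorem stmt12 (a : ℕ → ℂ) (hmod : ∀ n, ‖a n‖ = 1)
    (hratio : Tendsto (fun n => a (n + 1) / a n) atTop (nhds 1))
    (hdense : ∀ z : ℂ, ‖z‖ = 1 → z ∈ closure (Set.range a))
    (hunif : ∀ ε > 0, ∃ r ∈ Set.Ioo (0:ℝ) 1, ∀ᶠ N : ℕ in atTop,
      ∀ n : ℕ, r * N ≤ (n : ℝ) → n ≤ N → ‖a n - a N‖ < ε) :
    ¬ ∃ L : ℂ, Tendsto (fun N : ℕ => (N : ℂ)⁻¹ * ∑ n ∈ Finset.Icc 1 N, a n)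
      atTop (nhds L) :=
  stmt12_general a hdense hunif
end

section
/- Let E ⊆ ℕ have positive natural density d(E) > 0, let b : ℕ → ℕ enumerate E in increasing order, and let c : ℕ → ℂ be a bounded sequence. If the Cesàro limit lim_{N→∞} (1/N) ∑_{n=1}^N c(n)·1_E(n) exists and equals L, then lim_{N→∞} (1/N) ∑_{n=1}^N c(b(n)) exists and equals L/d(E). -/
/-! If `M = b N` is the `(N + 1)`-st element of `E`, the terms `c (b n)`, `n ≤ N`, are exactly the
terms `c m` with `m ≤ M` and `m ∈ E`, and `N + 1` is the number of elements of `E` up to `M`.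
So the average of the first `N + 1` terms `c (b n)` is the quotient of the two Cesàro means at
`M`, up to the term at `0`, and `M → ∞` with `N`. -/

open Filter Finset Topology

theorem StrictMono.sum_range_succ_comp_eq_sum_indicator {E : Set ℕ} {b : ℕ → ℕ}
    (hb : StrictMono b) (hrange : Set.range b = E) {M : Type*} [AddCommMonoid M] (f : ℕ → M)
    (N : ℕ) : ∑ n ∈ range (N + 1), f (b n) = ∑ m ∈ range (b N + 1), E.indicator f m := by
  classical
  have hfilter : {m ∈ range (b N + 1) | m ∈ E} = (range (N + 1)).image b := by
    ext m
    simp only [mem_filter, mem_image, mem_range, ← hrange, Set.mem_range, Nat.lt_succ_iff]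
    constructor
    · rintro ⟨hm, k, rfl⟩
      exact ⟨k, hb.le_iff_le.mp hm, rfl⟩
    · rintro ⟨k, hk, rfl⟩
      exact ⟨hb.monotone hk, k, rfl⟩
  rw [sum_indicator_eq_sum_filter, hfilter, sum_image hb.injective.injOn]

theorem sum_range_succ_eq_add_sum_Icc {M : Type*} [AddCommMonoid M] (f : ℕ → M) (n : ℕ) :
    ∑ m ∈ range (n + 1), f m = f 0 + ∑ m ∈ Icc 1 n, f m := by
  rw [sum_range_eq_add_Ico f n.add_one_pos, Ico_add_one_right_eq_Icc]

theorem tendsto_add_div_add_of_tendsto_div {𝕜 : Type*} [RCLike 𝕜] {u v : ℕ → 𝕜} {a a' l d : 𝕜}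
    (hd : d ≠ 0) (hu : Tendsto (fun n => u n / n) atTop (𝓝 l))
    (hv : Tendsto (fun n => v n / n) atTop (𝓝 d)) :
    Tendsto (fun n => (a + u n) / (a' + v n)) atTop (𝓝 (l / d)) := by
  have hnum := (tendsto_const_div_atTop_nhds_zero_nat a).add hu
  have hden := (tendsto_const_div_atTop_nhds_zero_nat a').add hv
  rw [zero_add] at hnum hden
  refine (hnum.div hden hd).congr' ?_
  filter_upwards [eventually_ne_atTop 0] with n hn
  rw [Pi.div_apply, ← add_div, ← add_div, div_div_div_cancel_right₀ (Nat.cast_ne_zero.mpr hn)]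

theorem stmt13_general (E : Set ℕ) (dE : ℝ) (hdE : 0 < dE)
    (hdens : Tendsto
      (fun N : ℕ => (∑ n ∈ Finset.Icc 1 N, Set.indicator E (fun _ => (1:ℝ)) n) / (N : ℝ))
      atTop (nhds dE))
    (b : ℕ → ℕ) (hb : StrictMono b) (hrange : Set.range b = E)
    (c : ℕ → ℂ)
    (L : ℂ)
    (hlim : Tendsto (fun N : ℕ => (∑ n ∈ Finset.Icc 1 N, Set.indicator E c n) / (N : ℂ))
      atTop (nhds L)) :
    Tendsto (fun N : ℕ => (∑ n ∈ Finset.range N, c (b n)) / (N : ℂ))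
      atTop (nhds (L / (dE : ℂ))) := by
  have hdensℂ : Tendsto (fun M : ℕ =>
      ((∑ n ∈ Icc 1 M, E.indicator (fun _ => (1 : ℝ)) n : ℝ) : ℂ) / (M : ℂ)) atTop (𝓝 dE) := by
    simpa using hdens.ofReal
  have hratio := tendsto_add_div_add_of_tendsto_div (a := E.indicator c 0)
    (a' := ((E.indicator (fun _ => (1 : ℝ)) 0 : ℝ) : ℂ))
    (Complex.ofReal_ne_zero.mpr hdE.ne') hlim hdensℂ
  rw [← tendsto_add_atTop_iff_nat 1]
  refine (hratio.comp hb.tendsto_atTop).congr fun N => ?_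
  have hcount : E.indicator (fun _ => 1) 0 + ∑ m ∈ Icc 1 (b N), E.indicator (fun _ => (1 : ℝ)) m
      = ((N + 1 : ℕ) : ℝ) := by
    rw [← sum_range_succ_eq_add_sum_Icc, ← hb.sum_range_succ_comp_eq_sum_indicator hrange]
    simp
  rw [Function.comp_apply, hb.sum_range_succ_comp_eq_sum_indicator hrange,
    sum_range_succ_eq_add_sum_Icc]
  congr 1
  exact_mod_cast hcount

/-- If `E ⊆ ℕ` has positive natural density `dE`, `b` enumerates `E` in
increasing order, `c` is bounded, and `(1/N) ∑_{n≤N} c(n)·1_E(n) → L`, then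
`(1/N) ∑_{n≤N} c(b(n)) → L / dE`. -/
theorem stmt13 (E : Set ℕ) (dE : ℝ) (hdE : 0 < dE)
    (hdens : Tendsto
      (fun N : ℕ => (∑ n ∈ Finset.Icc 1 N, Set.indicator E (fun _ => (1:ℝ)) n) / (N : ℝ))
      atTop (nhds dE))
    (b : ℕ → ℕ) (hb : StrictMono b) (hrange : Set.range b = E)
    (c : ℕ → ℂ) (C : ℝ) (hc : ∀ n, ‖c n‖ ≤ C)
    (L : ℂ)
    (hlim : Tendsto (fun N : ℕ => (∑ n ∈ Finset.Icc 1 N, Set.indicator E c n) / (N : ℂ))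
      atTop (nhds L)) :
    Tendsto (fun N : ℕ => (∑ n ∈ Finset.range N, c (b n)) / (N : ℂ))
      atTop (nhds (L / (dE : ℂ))) :=
  stmt13_general E dE hdE hdens b hb hrange c L hlim
end

section
/- Let a : ℕ → ℝ be a sequence such that for every nonzero k ∈ ℤ, (1/N)∑_{n=1}^N e^{2πi k a(n)} → 0 (i.e. (a(n)) is equidistributed mod 1), and let α be irrational. Then the sequence (⌊a(n)⌋·α)_{n∈ℕ} is equidistributed mod 1. -/
/-!
Write `e(x) = exp(2πix)` and `θ = kα`. Since `⌊t⌋ = t - {t}`, we have `e(θ⌊t⌋) = e(θt) g({t})` with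
`g(s) = e(-θs)`. Weyl sums of `(a n)` vanish at every nonzero frequency, and `θ + m ≠ 0` for every
integer `m` because `θ` is irrational; by density of trigonometric polynomials in `C(ℝ/ℤ, ℂ)` this
gives `(1/N) ∑ e(θ a n) φ(a n) → 0` for every continuous `φ` on the circle, and
`(1/N) ∑ φ(a n) → ∫ φ`. The function `g ∘ fract` is discontinuous only at the integers, so we cut it
off with a continuous bump `ψ` equal to `1` near `0` and of small integral: `(1 - ψ) (g ∘ fract)`
is continuous, and the error it makes is `ψ`, whose mean along `(a n)` tends to `∫ ψ`.
-/

open Filter Real Topology MeasureTheory Metric AddCircle Set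

noncomputable def cesaroMean (f : ℕ → ℂ) (N : ℕ) : ℂ := (N : ℂ)⁻¹ * ∑ n ∈ Finset.Icc 1 N, f n

section cesaroMean

variable {f g : ℕ → ℂ} {N : ℕ}

theorem cesaroMean_add : cesaroMean (fun n ↦ f n + g n) N = cesaroMean f N + cesaroMean g N := by
  simp only [cesaroMean, Finset.sum_add_distrib, mul_add]

theorem cesaroMean_sub : cesaroMean (fun n ↦ f n - g n) N = cesaroMean f N - cesaroMean g N := by
  simp only [cesaroMean, Finset.sum_sub_distrib, mul_sub]

theorem cesaroMean_const_mul (c : ℂ) : cesaroMean (fun n ↦ c * f n) N = c * cesaroMean f N := by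
  simp only [cesaroMean, ← Finset.mul_sum]
  ring

theorem norm_cesaroMean_le_re (h : ∀ n, ‖f n‖ ≤ (g n).re) :
    ‖cesaroMean f N‖ ≤ (cesaroMean g N).re := by
  have hN : (N : ℂ)⁻¹ = ((N : ℝ)⁻¹ : ℝ) := by push_cast; rfl
  rw [cesaroMean, cesaroMean, norm_mul, hN, Complex.re_ofReal_mul, Complex.re_sum,
    Complex.norm_real, Real.norm_of_nonneg (by positivity)]
  exact mul_le_mul_of_nonneg_left ((norm_sum_le _ _).trans (Finset.sum_le_sum fun n _ ↦ h n))
    (by positivity)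

theorem norm_cesaroMean_le {C : ℝ} (h : ∀ n, ‖f n‖ ≤ C) : ‖cesaroMean f N‖ ≤ C := by
  have hC : 0 ≤ C := (norm_nonneg _).trans (h 0)
  calc ‖cesaroMean f N‖ ≤ (cesaroMean (fun _ ↦ (C : ℂ)) N).re :=
        norm_cesaroMean_le_re fun n ↦ by simpa using h n
    _ ≤ C := by
      rcases N.eq_zero_or_pos with rfl | hN
      · simpa [cesaroMean] using hC
      · simp [cesaroMean, hN.ne']

theorem tendsto_cesaroMean_const (c : ℂ) : Tendsto (cesaroMean fun _ ↦ c) atTop (𝓝 c) :=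
  tendsto_const_nhds.congr' <| (eventually_ge_atTop 1).mono fun N hN ↦ by
    simp [cesaroMean, Nat.one_le_iff_ne_zero.1 hN]

end cesaroMean

theorem tendsto_zero_of_forall_norm_sub_le {E : Type*} [SeminormedAddCommGroup E] {u : ℕ → E}
    (h : ∀ ε > 0, ∃ v : ℕ → E, ∃ r : ℕ → ℝ, ∃ c < ε, Tendsto v atTop (𝓝 0) ∧
      Tendsto r atTop (𝓝 c) ∧ ∀ N, ‖u N - v N‖ ≤ r N) :
    Tendsto u atTop (𝓝 0) := by
  refine Metric.tendsto_nhds.2 fun ε hε ↦ ?_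
  obtain ⟨v, r, c, hc, hv, hr, huv⟩ := h (ε / 2) (half_pos hε)
  filter_upwards [hv.eventually (ball_mem_nhds 0 (half_pos hε)), hr.eventually (gt_mem_nhds hc)]
    with N hvN hrN
  rw [dist_zero_right] at hvN ⊢
  calc ‖u N‖ ≤ ‖u N - v N‖ + ‖v N‖ := norm_le_norm_sub_add _ _
    _ < ε := by linarith [huv N]

theorem tendsto_cesaroMean_of_span_dense {X : Type*} [TopologicalSpace X] [CompactSpace X]
    {s : Set C(X, ℂ)} (hs : (Submodule.span ℂ s).topologicalClosure = ⊤)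
    {w : ℕ → ℂ} (hw : ∀ n, ‖w n‖ ≤ 1) (x : ℕ → X) (L : C(X, ℂ) →L[ℂ] ℂ)
    (hL : ∀ φ ∈ s, Tendsto (cesaroMean fun n ↦ w n * φ (x n)) atTop (𝓝 (L φ)))
    (φ : C(X, ℂ)) : Tendsto (cesaroMean fun n ↦ w n * φ (x n)) atTop (𝓝 (L φ)) := by
  let S : Submodule ℂ C(X, ℂ) :=
    { carrier := {φ | Tendsto (cesaroMean fun n ↦ w n * φ (x n)) atTop (𝓝 (L φ))}
      add_mem' := fun {φ ψ} hφ hψ ↦ by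
        show Tendsto _ _ _
        rw [map_add]
        refine (hφ.add hψ).congr fun N ↦ ?_
        simp only [ContinuousMap.add_apply, mul_add, cesaroMean_add]
      zero_mem' := by
        simpa only [Set.mem_ofPred_eq, ContinuousMap.zero_apply, mul_zero, map_zero]
          using tendsto_cesaroMean_const 0
      smul_mem' := fun c φ hφ ↦ by
        show Tendsto _ _ _
        rw [map_smul, smul_eq_mul]
        refine (hφ.const_mul c).congr fun N ↦ ?_
        simp only [ContinuousMap.smul_apply, smul_eq_mul, mul_left_comm (w _),
          cesaroMean_const_mul] }
  have hlip (N : ℕ) : LipschitzWith 1 fun φ : C(X, ℂ) ↦ cesaroMean (fun n ↦ w n * φ (x n)) N := by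
    refine LipschitzWith.of_dist_le_mul fun φ ψ ↦ ?_
    rw [NNReal.coe_one, one_mul, dist_eq_norm, dist_eq_norm, ← cesaroMean_sub]
    refine norm_cesaroMean_le fun n ↦ ?_
    rw [← mul_sub, norm_mul]
    simpa using mul_le_mul (hw n) (ContinuousMap.norm_coe_le_norm (φ - ψ) (x n)) (norm_nonneg _)
      zero_le_one
  have hS : IsClosed (S : Set C(X, ℂ)) :=
    (LipschitzWith.uniformEquicontinuous _ 1 hlip).equicontinuous.isClosed_setOfPred_tendsto
      L.continuous
  have hspan : Submodule.span ℂ s ≤ S := Submodule.span_le.2 fun φ hφ ↦ hL φ hφ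
  have := (Submodule.span ℂ s).topologicalClosure_minimal hspan hS
  rw [hs] at this
  exact this Submodule.mem_top
def HasVanishingWeylSums (a : ℕ → ℝ) : Prop :=
  ∀ β : ℝ, β ≠ 0 →
    Tendsto (cesaroMean fun n ↦ Complex.exp (2 * π * Complex.I * (β * a n))) atTop (𝓝 0)

noncomputable def ContinuousMap.integralCLM {X : Type*} [TopologicalSpace X] [CompactSpace X]
    [MeasurableSpace X] [BorelSpace X] (μ : Measure X) [IsFiniteMeasure μ] :
    C(X, ℂ) →L[ℂ] ℂ :=
  (L1.integralCLM' ℂ).comp (ContinuousMap.toLp 1 μ ℂ)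

theorem ContinuousMap.integralCLM_apply {X : Type*} [TopologicalSpace X] [CompactSpace X]
    [MeasurableSpace X] [BorelSpace X] (μ : Measure X) [IsFiniteMeasure μ] (φ : C(X, ℂ)) :
    ContinuousMap.integralCLM μ φ = ∫ x, φ x ∂μ := by
  rw [ContinuousMap.integralCLM, ContinuousLinearMap.comp_apply]
  exact (L1.integral_eq' ℂ _).symm.trans <| (L1.integral_eq_integral _).trans
    (integral_congr_ae (ContinuousMap.coeFn_toLp (𝕜 := ℂ) μ φ))

theorem integral_fourier {T : ℝ} [Fact (0 < T)] (m : ℤ) :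
    ∫ x, fourier m x ∂(haarAddCircle (T := T)) = if m = 0 then 1 else 0 := by
  have := congr_fun (fourierCoeff_fourier (T := T) m) 0
  simp only [fourierCoeff, neg_zero, fourier_zero, one_smul] at this
  rw [this, Pi.single_apply]
  simp only [eq_comm]

theorem fourier_coe_unitAddCircle (m : ℤ) (t : ℝ) :
    fourier m (t : UnitAddCircle) = Complex.exp (2 * π * Complex.I * (m * t)) := by
  rw [fourier_coe_apply, Complex.ofReal_one, div_one, mul_assoc _ (m : ℂ)]

namespace HasVanishingWeylSums

variable {a : ℕ → ℝ} (ha : HasVanishingWeylSums a)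
include ha

theorem tendsto_cesaroMean_exp_mul {θ : ℝ} (hθ : ∀ m : ℤ, θ + m ≠ 0) (φ : C(UnitAddCircle, ℂ)) :
    Tendsto (cesaroMean fun n ↦ Complex.exp (2 * π * Complex.I * (θ * a n)) * φ (a n)) atTop
      (𝓝 0) := by
  refine tendsto_cesaroMean_of_span_dense span_fourier_closure_eq_top
    (w := fun n ↦ Complex.exp (2 * π * Complex.I * (θ * a n)))
    (fun n ↦ by simp [Complex.norm_exp]) (fun n ↦ (a n : UnitAddCircle)) 0 ?_ φ
  rintro _ ⟨m, rfl⟩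
  have hexp (n : ℕ) :
      Complex.exp (2 * π * Complex.I * (θ * a n)) * fourier m (a n : UnitAddCircle) =
        Complex.exp (2 * π * Complex.I * ((θ + m : ℝ) * a n)) := by
    rw [fourier_coe_unitAddCircle, ← Complex.exp_add]
    push_cast
    ring_nf
  simpa only [hexp, FunLike.coe_zero, Pi.zero_apply] using ha (θ + m) (hθ m)

theorem tendsto_cesaroMean_apply (φ : C(UnitAddCircle, ℂ)) :
    Tendsto (cesaroMean fun n ↦ φ (a n)) atTop (𝓝 (∫ x, φ x ∂haarAddCircle)) := by
  have := tendsto_cesaroMean_of_span_dense span_fourier_closure_eq_top (w := fun _ ↦ 1)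
    (fun _ ↦ norm_one.le) (fun n ↦ (a n : UnitAddCircle)) (ContinuousMap.integralCLM haarAddCircle)
    ?_ φ
  · simpa only [one_mul, ContinuousMap.integralCLM_apply] using this
  rintro _ ⟨m, rfl⟩
  rw [ContinuousMap.integralCLM_apply, integral_fourier]
  split_ifs with hm
  · subst hm
    simpa only [fourier_zero, mul_one] using tendsto_cesaroMean_const 1
  · simpa only [fourier_coe_unitAddCircle, one_mul, Complex.ofReal_intCast]
      using ha m (Int.cast_ne_zero.2 hm)

end HasVanishingWeylSums

theorem exists_continuous_eventually_eq_one_integral_le {X : Type*} [PseudoMetricSpace X]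
    [MeasurableSpace X] [OpensMeasurableSpace X] (μ : Measure X) [IsFiniteMeasure μ] (x₀ : X)
    {r : ℝ} (hr : 0 < r) :
    ∃ ψ : C(X, ℝ), (∀ x, ψ x ∈ Icc 0 1) ∧ (∀ᶠ x in 𝓝 x₀, ψ x = 1) ∧
      ∫ x, ψ x ∂μ ≤ μ.real (closedBall x₀ r) := by
  obtain ⟨ψ, hψ0, hψ1, hψ01⟩ := exists_continuous_zero_one_of_isClosed isOpen_ball.isClosed_compl
    isClosed_closedBall
    (disjoint_compl_left_iff_subset.2 (closedBall_subset_ball (half_lt_self hr)) :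
      Disjoint (ball x₀ r)ᶜ (closedBall x₀ (r / 2)))
  refine ⟨ψ, hψ01, eventually_of_mem (closedBall_mem_nhds x₀ (half_pos hr)) hψ1, ?_⟩
  have hle (x : X) : ψ x ≤ (closedBall x₀ r).indicator 1 x := by
    by_cases hx : x ∈ ball x₀ r
    · rw [indicator_of_mem (ball_subset_closedBall hx)]
      exact (hψ01 x).2
    · rw [hψ0 hx]
      exact indicator_nonneg (fun _ _ ↦ zero_le_one) x
  calc ∫ x, ψ x ∂μ ≤ ∫ x, (closedBall x₀ r).indicator 1 x ∂μ :=
        integral_mono_of_nonneg (ae_of_all _ fun x ↦ (hψ01 x).1)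
          ((integrable_const 1).indicator measurableSet_closedBall) (ae_of_all _ hle)
    _ = μ.real (closedBall x₀ r) := integral_indicator_one measurableSet_closedBall

theorem haarAddCircle_real_closedBall_le (x : UnitAddCircle) {r : ℝ} (hr : 0 ≤ r) :
    (haarAddCircle : Measure UnitAddCircle).real (closedBall x r) ≤ 2 * r := by
  have hvol : (haarAddCircle : Measure UnitAddCircle) = volume := by
    rw [volume_eq_smul_haarAddCircle, ENNReal.ofReal_one, one_smul]
  rw [hvol, measureReal_def, AddCircle.volume_closedBall, ENNReal.toReal_ofReal (by positivity)]
  exact min_le_right _ _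

theorem continuous_mul_of_eventually_eq_zero {X M : Type*} [TopologicalSpace X]
    [TopologicalSpace M] [MulZeroClass M] [ContinuousMul M] {χ G : X → M} {x₀ : X}
    (hχ : Continuous χ) (hχ₀ : ∀ᶠ x in 𝓝 x₀, χ x = 0) (hG : ∀ x ≠ x₀, ContinuousAt G x) :
    Continuous fun x ↦ χ x * G x := by
  refine continuous_iff_continuousAt.2 fun x ↦ ?_
  by_cases hx : x = x₀
  · subst hx
    exact (continuousAt_const (y := (0 : M))).congr
      (hχ₀.mono fun y hy ↦ by simp only [hy, zero_mul])
  · exact hχ.continuousAt.mul (hG x hx)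

theorem exists_continuous_cutoff_mul_exp_fract (θ : ℝ) {ψ : C(UnitAddCircle, ℝ)}
    (hψ : ∀ᶠ x in 𝓝 0, ψ x = 1) :
    ∃ φ : C(UnitAddCircle, ℂ), ∀ t : ℝ,
      φ t = (1 - ψ t) * Complex.exp (2 * π * Complex.I * (-θ * Int.fract t)) := by
  have hcont : Continuous fun s : ℝ ↦ Complex.exp (2 * π * Complex.I * (-θ * s)) := by fun_prop
  refine ⟨⟨fun x ↦ (1 - ψ x) * Complex.exp (2 * π * Complex.I * (-θ * (equivIco 1 0 x : ℝ))),
    continuous_mul_of_eventually_eq_zero (by fun_prop) (hψ.mono fun x hx ↦ by simp [hx])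
      fun x hx ↦ ?_⟩, fun t ↦ ?_⟩
  · exact hcont.continuousAt.comp (continuous_subtype_val.continuousAt.comp
      (continuousAt_equivIco 1 0 (by simpa using hx)))
  · simp [coe_equivIco_mk_apply]

theorem norm_exp_floor_sub_mul_cutoff (θ t : ℝ) {c : ℝ} (hc : 0 ≤ c) :
    ‖Complex.exp (2 * π * Complex.I * (θ * (⌊t⌋ : ℝ))) - Complex.exp (2 * π * Complex.I * (θ * t)) *
      ((1 - c) * Complex.exp (2 * π * Complex.I * (-θ * Int.fract t)))‖ = c := by
  have hfloor : Complex.exp (2 * π * Complex.I * (θ * (⌊t⌋ : ℝ))) =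
      Complex.exp (2 * π * Complex.I * (θ * t)) *
        Complex.exp (2 * π * Complex.I * (-θ * Int.fract t)) := by
    rw [← Complex.exp_add, ← Int.self_sub_fract t]
    push_cast
    ring_nf
  rw [hfloor, ← mul_sub, show ∀ z : ℂ, z - (1 - c) * z = c * z by intro z; ring, norm_mul,
    norm_mul]
  simp [Complex.norm_exp, abs_of_nonneg hc]

theorem HasVanishingWeylSums.tendsto_cesaroMean_exp_mul_floor {a : ℕ → ℝ}
    (ha : HasVanishingWeylSums a) {θ : ℝ} (hθ : ∀ m : ℤ, θ + m ≠ 0) :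
    Tendsto (cesaroMean fun n ↦ Complex.exp (2 * π * Complex.I * (θ * (⌊a n⌋ : ℝ)))) atTop
      (𝓝 0) := by
  refine tendsto_zero_of_forall_norm_sub_le fun ε hε ↦ ?_
  obtain ⟨ψ, hψ01, hψ1, hψint⟩ := exists_continuous_eventually_eq_one_integral_le haarAddCircle
    (0 : UnitAddCircle) (by positivity : 0 < ε / 4)
  obtain ⟨φ, hφ⟩ := exists_continuous_cutoff_mul_exp_fract θ hψ1
  let ψℂ : C(UnitAddCircle, ℂ) := ⟨fun x ↦ ψ x, by fun_prop⟩
  have hmean : Tendsto (fun N ↦ (cesaroMean (fun n ↦ ψℂ (a n)) N).re) atTop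
      (𝓝 (∫ x, ψ x ∂haarAddCircle)) := by
    have := (Complex.continuous_re.tendsto _).comp (ha.tendsto_cesaroMean_apply ψℂ)
    simpa only [Function.comp_def, ψℂ, ContinuousMap.coe_mk, integral_complex_ofReal,
      Complex.ofReal_re] using this
  have hint : ∫ x, ψ x ∂haarAddCircle < ε := by
    linarith [haarAddCircle_real_closedBall_le (0 : UnitAddCircle) (by positivity : 0 ≤ ε / 4)]
  refine ⟨_, _, _, hint, ha.tendsto_cesaroMean_exp_mul hθ φ, hmean, fun N ↦ ?_⟩
  rw [← cesaroMean_sub]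
  refine norm_cesaroMean_le_re fun n ↦ ?_
  rw [hφ, norm_exp_floor_sub_mul_cutoff _ _ (hψ01 _).1]
  simp [ψℂ]

/-- If `(a(n)·β)` is equidistributed mod 1 for every nonzero real `β`
(Weyl criterion form) and `α` is irrational, then `(⌊a(n)⌋·α)` is equidistributed mod 1. -/
theorem stmt15 (a : ℕ → ℝ)
    (hweyl : ∀ β : ℝ, β ≠ 0 →
      Tendsto (fun N : ℕ => (N : ℂ)⁻¹ *
        ∑ n ∈ Finset.Icc 1 N, Complex.exp (2 * π * Complex.I * (β * a n)))
        atTop (nhds 0))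
    (α : ℝ) (hα : Irrational α) (k : ℤ) (hk : k ≠ 0) :
    Tendsto (fun N : ℕ => (N : ℂ)⁻¹ *
        ∑ n ∈ Finset.Icc 1 N, Complex.exp (2 * π * Complex.I * ((k : ℝ) * (⌊a n⌋ : ℝ) * α)))
      atTop (nhds 0) := by
  have hθ (m : ℤ) : (k * α : ℝ) + m ≠ 0 := ((hα.intCast_mul hk).add_intCast m).ne_zero
  have hkα (n : ℕ) :
      ((k : ℝ) : ℂ) * ((⌊a n⌋ : ℝ) : ℂ) * α = ((k * α : ℝ) : ℂ) * ((⌊a n⌋ : ℝ) : ℂ) := by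
    push_cast
    ring
  simp_rw [hkα]
  exact HasVanishingWeylSums.tendsto_cesaroMean_exp_mul_floor hweyl hθ
end

section
/- Let (Y,d) be a compact metric space, a : ℤ → Y a sequence admitting correlations on intervals M = ([M_k]), ν the weak-star limit of (1/M_k)∑_{m≤M_k} δ_{a(m)}, and μ := weak-star lim (1/M_k)∑_{m≤M_k} δ_{T^m a} on Y^ℤ, where T is the shift. Then for all s ∈ ℕ, n_1,…,n_s ∈ ℤ and all φ_1,…,φ_s : Y → ℂ Riemann-integrable with respect to ν, the limit lim_k (1/M_k) ∑_{m≤M_k} ∏_{j=1}^s φ_j(a(m+n_j)) exists and equals ∫ ∏_{j=1}^s φ_j(x(n_j)) dμ(x). -/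
open Filter MeasureTheory

/-- A complex-valued function is Riemann-integrable with respect to a measure `ν` if it is
measurable and its real and imaginary parts can be squeezed between continuous functions
whose `ν`-integrals are arbitrarily close. -/
def RiemannIntC {Y : Type*} [TopologicalSpace Y] [MeasurableSpace Y]
    (ν : Measure Y) (φ : Y → ℂ) : Prop :=
  Measurable φ ∧
  (∀ ε > (0 : ℝ), ∃ g h : Y → ℝ, Continuous g ∧ Continuous h ∧
    (∀ y, g y ≤ (φ y).re ∧ (φ y).re ≤ h y) ∧ (∫ y, (h y - g y) ∂ν) ≤ ε) ∧
  (∀ ε > (0 : ℝ), ∃ g h : Y → ℝ, Continuous g ∧ Continuous h ∧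
    (∀ y, g y ≤ (φ y).im ∧ (φ y).im ≤ h y) ∧ (∫ y, (h y - g y) ∂ν) ≤ ε)

private lemma contIntR {Y : Type*} [MetricSpace Y] [CompactSpace Y]
    [MeasurableSpace Y] [BorelSpace Y] {α : Type*} [MeasurableSpace α]
    (ρ : Measure α) [IsFiniteMeasure ρ] (f : Y → ℝ) (hf : Continuous f)
    (e : α → Y) (he : Measurable e) : Integrable (fun x => f (e x)) ρ := by
  obtain ⟨c, hc⟩ := isCompact_univ.exists_bound_of_continuousOn hf.continuousOn
  exact Integrable.mono' (integrable_const c)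
    ((hf.measurable.comp he).aestronglyMeasurable)
    (Filter.Eventually.of_forall fun x => hc _ (Set.mem_univ _))

private lemma znorm_le (z : ℂ) : ‖z‖ ≤ |z.re| + |z.im| := by
  exact Complex.norm_le_abs_re_add_abs_im z

private lemma approx {Y : Type*} [MetricSpace Y] [CompactSpace Y]
    [MeasurableSpace Y] [BorelSpace Y]
    (ν : Measure Y) [IsProbabilityMeasure ν] (φ0 : Y → ℂ) (hφ0 : RiemannIntC ν φ0)
    (C0 : ℝ) (hre : ∀ y, |(φ0 y).re| ≤ C0) (him : ∀ y, |(φ0 y).im| ≤ C0)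
    (δ : ℝ) (hδ : 0 < δ) :
    ∃ ψ : Y → ℂ, ∃ D : Y → ℝ, Continuous ψ ∧ Continuous D ∧ (∀ y, 0 ≤ D y) ∧
      (∀ y, ‖φ0 y - ψ y‖ ≤ D y) ∧ (∀ y, ‖ψ y‖ ≤ 2 * C0) ∧ (∫ y, D y ∂ν) ≤ 2 * δ := by
  obtain ⟨g, h, hg, hh, hgh, hint⟩ := hφ0.2.1 δ hδ
  obtain ⟨g', h', hg', hh', hgh', hint'⟩ := hφ0.2.2 δ hδ
  set g₁ : Y → ℝ := fun y => max (g y) (-C0) with hg₁def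
  set g₂ : Y → ℝ := fun y => max (g' y) (-C0) with hg₂def
  have hg₁c : Continuous g₁ := hg.max continuous_const
  have hg₂c : Continuous g₂ := hg'.max continuous_const
  have hg₁le : ∀ y, g₁ y ≤ (φ0 y).re := fun y =>
    max_le (hgh y).1 ((abs_le.mp (hre y)).1)
  have hg₂le : ∀ y, g₂ y ≤ (φ0 y).im := fun y =>
    max_le (hgh' y).1 ((abs_le.mp (him y)).1)
  have hg₁abs : ∀ y, |g₁ y| ≤ C0 := fun y =>
    abs_le.mpr ⟨le_max_right _ _, (hg₁le y).trans ((abs_le.mp (hre y)).2)⟩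
  have hg₂abs : ∀ y, |g₂ y| ≤ C0 := fun y =>
    abs_le.mpr ⟨le_max_right _ _, (hg₂le y).trans ((abs_le.mp (him y)).2)⟩
  refine ⟨fun y => (g₁ y : ℂ) + Complex.I * (g₂ y : ℂ),
    fun y => (h y - g₁ y) + (h' y - g₂ y), ?_, ?_, ?_, ?_, ?_, ?_⟩
  · exact (Complex.continuous_ofReal.comp hg₁c).add
      (continuous_const.mul (Complex.continuous_ofReal.comp hg₂c))
  · exact (hh.sub hg₁c).add (hh'.sub hg₂c)
  · intro y
    have h1 : g₁ y ≤ h y := (hg₁le y).trans (hgh y).2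
    have h2 : g₂ y ≤ h' y := (hg₂le y).trans (hgh' y).2
    show (0:ℝ) ≤ h y - g₁ y + (h' y - g₂ y)
    linarith
  · intro y
    have e1 : (φ0 y - ((g₁ y : ℂ) + Complex.I * (g₂ y : ℂ))).re = (φ0 y).re - g₁ y := by
      simp
    have e2 : (φ0 y - ((g₁ y : ℂ) + Complex.I * (g₂ y : ℂ))).im = (φ0 y).im - g₂ y := by
      simp
    refine (znorm_le _).trans ?_
    rw [e1, e2, abs_of_nonneg (by linarith [hg₁le y]), abs_of_nonneg (by linarith [hg₂le y])]
    have := (hgh y).2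
    have := (hgh' y).2
    show (φ0 y).re - g₁ y + ((φ0 y).im - g₂ y) ≤ h y - g₁ y + (h' y - g₂ y)
    linarith
  · intro y
    refine (znorm_le _).trans ?_
    have e1 : (((g₁ y : ℂ) + Complex.I * (g₂ y : ℂ))).re = g₁ y := by simp
    have e2 : (((g₁ y : ℂ) + Complex.I * (g₂ y : ℂ))).im = g₂ y := by simp
    rw [e1, e2]
    linarith [hg₁abs y, hg₂abs y]
  · have i1 : Integrable (fun y => h y - g₁ y) ν :=
      contIntR ν _ (hh.sub hg₁c) id measurable_id
    have i2 : Integrable (fun y => h' y - g₂ y) ν :=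
      contIntR ν _ (hh'.sub hg₂c) id measurable_id
    have i3 : Integrable (fun y => h y - g y) ν :=
      contIntR ν _ (hh.sub hg) id measurable_id
    have i4 : Integrable (fun y => h' y - g' y) ν :=
      contIntR ν _ (hh'.sub hg') id measurable_id
    rw [integral_add i1 i2]
    have m1 : (∫ y, (h y - g₁ y) ∂ν) ≤ ∫ y, (h y - g y) ∂ν :=
      integral_mono i1 i3 fun y => by
        have : g y ≤ g₁ y := le_max_left _ _
        simp only
        linarith
    have m2 : (∫ y, (h' y - g₂ y) ∂ν) ≤ ∫ y, (h' y - g' y) ∂ν :=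
      integral_mono i2 i4 fun y => by
        have : g' y ≤ g₂ y := le_max_left _ _
        simp only
        linarith
    linarith [m1.trans hint, m2.trans hint']

/-- Telescoping step. -/
private lemma sum_shift_step (f : ℕ → ℂ) (M : ℕ) :
    (∑ m ∈ Finset.range M, f (m + 1)) - ∑ m ∈ Finset.range M, f m = f M - f 0 := by
  have h1 := Finset.sum_range_succ' f M
  have h2 := Finset.sum_range_succ f M
  linear_combination h2 - h1

private lemma sum_shift_nat (b : ℤ → ℂ) (C : ℝ) (hb : ∀ m, ‖b m‖ ≤ C) (M n : ℕ) :
    ‖(∑ m ∈ Finset.range M, b ((m : ℤ) + (n : ℤ))) - ∑ m ∈ Finset.range M, b m‖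
      ≤ 2 * n * C := by
  set g : ℕ → ℂ := fun k => ∑ m ∈ Finset.range M, b ((m : ℤ) + k) with hg
  have hstep : ∀ k : ℕ, g (k + 1) - g k = b ((M : ℤ) + k) - b k := by
    intro k
    have h1 : g (k + 1) = ∑ m ∈ Finset.range M, (fun m : ℕ => b ((m : ℤ) + k)) (m + 1) := by
      refine Finset.sum_congr rfl fun m _ => ?_
      simp only
      congr 1
      push_cast
      ring
    rw [h1]
    have := sum_shift_step (fun m : ℕ => b ((m : ℤ) + k)) M
    rw [this]
    norm_num
  have htel : (∑ k ∈ Finset.range n, (g (k + 1) - g k)) = g n - g 0 :=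
    Finset.sum_range_sub g n
  have hg0 : g 0 = ∑ m ∈ Finset.range M, b m := by
    refine Finset.sum_congr rfl fun m _ => ?_
    norm_num
  have : ‖g n - g 0‖ ≤ 2 * n * C := by
    rw [← htel]
    calc ‖∑ k ∈ Finset.range n, (g (k + 1) - g k)‖
        ≤ ∑ k ∈ Finset.range n, ‖g (k + 1) - g k‖ := norm_sum_le _ _
      _ ≤ ∑ k ∈ Finset.range n, (2 * C) := by
          refine Finset.sum_le_sum fun k _ => ?_
          rw [hstep k]
          calc ‖b ((M : ℤ) + k) - b k‖ ≤ ‖b ((M : ℤ) + k)‖ + ‖b k‖ := norm_sub_le _ _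
            _ ≤ C + C := add_le_add (hb _) (hb _)
            _ = 2 * C := by ring
      _ = 2 * n * C := by rw [Finset.sum_const, Finset.card_range]; push_cast; ring
  rw [hg0] at this
  exact this

private lemma sum_shift_int (b : ℤ → ℂ) (C : ℝ) (hb : ∀ m, ‖b m‖ ≤ C) (M : ℕ) (n : ℤ) :
    ‖(∑ m ∈ Finset.range M, b ((m : ℤ) + n)) - ∑ m ∈ Finset.range M, b m‖
      ≤ 2 * n.natAbs * C := by
  rcases le_or_gt 0 n with h | h
  · have hn : ((n.natAbs : ℤ)) = n := Int.natAbs_of_nonneg h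
    have := sum_shift_nat b C hb M n.natAbs
    rwa [hn] at this
  · set b' : ℤ → ℂ := fun t => b (t + n) with hb'
    have hb'b : ∀ m, ‖b' m‖ ≤ C := fun m => hb _
    have hp : ((n.natAbs : ℤ)) = -n := Int.ofNat_natAbs_of_nonpos h.le
    have key := sum_shift_nat b' C hb'b M n.natAbs
    have e1 : (∑ m ∈ Finset.range M, b' ((m : ℤ) + (n.natAbs : ℤ)))
        = ∑ m ∈ Finset.range M, b m := by
      refine Finset.sum_congr rfl fun m _ => ?_
      simp only [hb']
      congr 1
      rw [hp]; ring
    have e2 : (∑ m ∈ Finset.range M, b' (m : ℤ)) = ∑ m ∈ Finset.range M, b ((m : ℤ) + n) :=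
      rfl
    rw [e1, e2] at key
    rw [norm_sub_rev]
    exact key

private lemma shiftC {Y : Type*} [MetricSpace Y] [CompactSpace Y]
    [MeasurableSpace Y] [BorelSpace Y]
    (a : ℤ → Y) (Mk : ℕ → ℕ) (hMk : StrictMono Mk) (ν : Measure Y)
    (hν : ∀ f : Y → ℂ, Continuous f →
      Tendsto (fun K => (Mk K : ℂ)⁻¹ * ∑ m ∈ Finset.range (Mk K), f (a m))
        atTop (nhds (∫ y, f y ∂ν)))
    (f : Y → ℂ) (hf : Continuous f) (n : ℤ) :
    Tendsto (fun K => (Mk K : ℂ)⁻¹ * ∑ m ∈ Finset.range (Mk K), f (a ((m : ℤ) + n)))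
      atTop (nhds (∫ y, f y ∂ν)) := by
  obtain ⟨C, hC⟩ := isCompact_univ.exists_bound_of_continuousOn hf.continuousOn
  have hC' : ∀ m : ℤ, ‖f (a m)‖ ≤ C := fun m => hC _ (Set.mem_univ _)
  have hinv : Tendsto (fun K => (Mk K : ℝ)⁻¹) atTop (nhds 0) :=
    (tendsto_natCast_atTop_atTop.comp hMk.tendsto_atTop).inv_tendsto_atTop
  have herr : Tendsto (fun K => (Mk K : ℂ)⁻¹ *
      ((∑ m ∈ Finset.range (Mk K), f (a ((m : ℤ) + n)))
        - ∑ m ∈ Finset.range (Mk K), f (a m))) atTop (nhds 0) := by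
    apply squeeze_zero_norm (a := fun K => (Mk K : ℝ)⁻¹ * (2 * n.natAbs * C))
    · intro K
      rw [norm_mul]
      have h1 : ‖((Mk K : ℂ))⁻¹‖ = (Mk K : ℝ)⁻¹ := by
        rw [norm_inv]; norm_num
      rw [h1]
      refine mul_le_mul_of_nonneg_left ?_ (by positivity)
      exact sum_shift_int (fun m => f (a m)) C hC' (Mk K) n
    · have := hinv.mul_const (2 * n.natAbs * C)
      simpa using this
  have := (hν f hf).add herr
  rw [add_zero] at this
  convert this using 2 with K
  ring

private lemma shiftR {Y : Type*} [MetricSpace Y] [CompactSpace Y]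
    [MeasurableSpace Y] [BorelSpace Y]
    (a : ℤ → Y) (Mk : ℕ → ℕ) (hMk : StrictMono Mk) (ν : Measure Y)
    (hν : ∀ f : Y → ℂ, Continuous f →
      Tendsto (fun K => (Mk K : ℂ)⁻¹ * ∑ m ∈ Finset.range (Mk K), f (a m))
        atTop (nhds (∫ y, f y ∂ν)))
    (D : Y → ℝ) (hD : Continuous D) (n : ℤ) :
    Tendsto (fun K => (Mk K : ℝ)⁻¹ * ∑ m ∈ Finset.range (Mk K), D (a ((m : ℤ) + n)))
      atTop (nhds (∫ y, D y ∂ν)) := by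
  have h := shiftC a Mk hMk ν hν (fun y => (D y : ℂ))
    (Complex.continuous_ofReal.comp hD) n
  have hint : ∫ y, ((D y : ℝ) : ℂ) ∂ν = ((∫ y, D y ∂ν : ℝ) : ℂ) := integral_ofReal
  rw [hint] at h
  have heq : (fun K => (Mk K : ℂ)⁻¹ * ∑ m ∈ Finset.range (Mk K), ((D (a ((m : ℤ) + n)) : ℝ) : ℂ))
      = fun K => (((Mk K : ℝ)⁻¹ * ∑ m ∈ Finset.range (Mk K), D (a ((m : ℤ) + n)) : ℝ) : ℂ) := by
    funext K
    push_cast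
    ring
  rw [heq] at h
  have h3 : Tendsto (fun K => ((((Mk K : ℝ)⁻¹ *
        ∑ m ∈ Finset.range (Mk K), D (a ((m : ℤ) + n)) : ℝ) : ℂ)).re) atTop
      (nhds (((∫ y, D y ∂ν : ℝ) : ℂ)).re) := (Complex.continuous_re.tendsto _).comp h
  simp only [Complex.ofReal_re] at h3
  exact h3

set_option maxHeartbeats 1000000 in
private lemma norm_prod_sub_prod_le' {ι : Type*} [DecidableEq ι] (t : Finset ι)
    (u v : ι → ℂ) (C : ℝ) (hC : 1 ≤ C)
    (hu : ∀ i ∈ t, ‖u i‖ ≤ C) (hv : ∀ i ∈ t, ‖v i‖ ≤ C) :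
    ‖(∏ i ∈ t, u i) - ∏ i ∈ t, v i‖ ≤ C ^ t.card * ∑ i ∈ t, ‖u i - v i‖ := by
  induction t using Finset.induction_on with
  | empty => simp
  | @insert i t hi ih =>
    rw [Finset.prod_insert hi, Finset.prod_insert hi, Finset.sum_insert hi,
      Finset.card_insert_of_notMem hi]
    have hC0 : (0 : ℝ) < C := lt_of_lt_of_le one_pos hC
    have hut : ‖∏ j ∈ t, u j‖ ≤ C ^ t.card := by
      calc ‖∏ j ∈ t, u j‖ ≤ ∏ j ∈ t, ‖u j‖ := Finset.norm_prod_le _ _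
        _ ≤ ∏ _j ∈ t, C := Finset.prod_le_prod (fun _ _ => norm_nonneg _)
            (fun j hj => hu j (Finset.mem_insert_of_mem hj))
        _ = C ^ t.card := Finset.prod_const C
    have ih' := ih (fun j hj => hu j (Finset.mem_insert_of_mem hj))
      (fun j hj => hv j (Finset.mem_insert_of_mem hj))
    have key : ‖u i * ∏ j ∈ t, u j - v i * ∏ j ∈ t, v j‖
        ≤ ‖u i - v i‖ * ‖∏ j ∈ t, u j‖ + ‖v i‖ * ‖(∏ j ∈ t, u j) - ∏ j ∈ t, v j‖ := by
      have e : u i * ∏ j ∈ t, u j - v i * ∏ j ∈ t, v j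
          = (u i - v i) * ∏ j ∈ t, u j + v i * ((∏ j ∈ t, u j) - ∏ j ∈ t, v j) := by ring
      rw [e]
      exact (norm_add_le _ _).trans (by rw [norm_mul, norm_mul])
    have hvi : ‖v i‖ ≤ C := hv i (Finset.mem_insert_self i t)
    have hpow : (0:ℝ) ≤ C ^ t.card := by positivity
    have hpow1 : C ^ t.card ≤ C ^ (t.card + 1) :=
      pow_le_pow_right₀ hC (Nat.le_succ _)
    have hsum0 : (0:ℝ) ≤ ∑ j ∈ t, ‖u j - v j‖ :=
      Finset.sum_nonneg fun _ _ => norm_nonneg _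
    calc ‖u i * ∏ j ∈ t, u j - v i * ∏ j ∈ t, v j‖
        ≤ ‖u i - v i‖ * ‖∏ j ∈ t, u j‖ + ‖v i‖ * ‖(∏ j ∈ t, u j) - ∏ j ∈ t, v j‖ := key
      _ ≤ ‖u i - v i‖ * C ^ t.card + C * (C ^ t.card * ∑ j ∈ t, ‖u j - v j‖) := by
          refine add_le_add (mul_le_mul_of_nonneg_left hut (norm_nonneg _)) ?_
          exact mul_le_mul hvi ih' (norm_nonneg _) hC0.le
      _ ≤ C ^ (t.card + 1) * (‖u i - v i‖ + ∑ j ∈ t, ‖u j - v j‖) := by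
          rw [pow_succ]
          nlinarith [mul_nonneg (mul_nonneg hpow (norm_nonneg (u i - v i)))
            (sub_nonneg.mpr hC)]


/-- if `a : ℤ → Y` (Y compact metric) admits correlations on the intervals
`[M_k]`, `ν` is the weak-star limit of the empirical measures of `a`, `μ` is the Furstenberg
measure (weak-star limit of averages of shifts of `δ_a` on `Y^ℤ`), and `φ_1,…,φ_s` are
Riemann-integrable with respect to `ν`, then the correlations
`(1/M_k) ∑_{m<M_k} ∏_j φ_j(a(m+n_j))` converge to `∫ ∏_j φ_j(x(n_j)) dμ(x)`. -/
theorem stmt17 {Y : Type*} [MetricSpace Y] [CompactSpace Y]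
    [MeasurableSpace Y] [BorelSpace Y]
    (a : ℤ → Y) (Mk : ℕ → ℕ) (hMk : StrictMono Mk)
    (hcorr : ∀ (s : ℕ) (nn : Fin s → ℤ) (f : Fin s → Y → ℂ), (∀ j, Continuous (f j)) →
      ∃ L : ℂ, Tendsto (fun K => (Mk K : ℂ)⁻¹ *
        ∑ m ∈ Finset.range (Mk K), ∏ j, f j (a ((m : ℤ) + nn j))) atTop (nhds L))
    (ν : Measure Y) [IsProbabilityMeasure ν]
    (hν : ∀ f : Y → ℂ, Continuous f →
      Tendsto (fun K => (Mk K : ℂ)⁻¹ * ∑ m ∈ Finset.range (Mk K), f (a m))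
        atTop (nhds (∫ y, f y ∂ν)))
    (μ : Measure (ℤ → Y)) [IsProbabilityMeasure μ]
    (hμ : ∀ F : (ℤ → Y) → ℂ, Continuous F →
      Tendsto (fun K => (Mk K : ℂ)⁻¹ *
        ∑ m ∈ Finset.range (Mk K), F (fun i => a (i + m))) atTop (nhds (∫ x, F x ∂μ)))
    (s : ℕ) (nn : Fin s → ℤ) (φ : Fin s → Y → ℂ)
    (hφ : ∀ j, RiemannIntC ν (φ j)) :
    Tendsto (fun K => (Mk K : ℂ)⁻¹ *
        ∑ m ∈ Finset.range (Mk K), ∏ j, φ j (a ((m : ℤ) + nn j)))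
      atTop (nhds (∫ x, ∏ j, φ j (x (nn j)) ∂μ)) := by
  classical
  -- uniform bounds on the real and imaginary parts of the φ j
  have hbd : ∀ j, ∃ c : ℝ, 0 ≤ c ∧ (∀ y, |(φ j y).re| ≤ c) ∧ (∀ y, |(φ j y).im| ≤ c) := by
    intro j
    obtain ⟨g, h, hg, hh, hgh, -⟩ := (hφ j).2.1 1 one_pos
    obtain ⟨g', h', hg', hh', hgh', -⟩ := (hφ j).2.2 1 one_pos
    obtain ⟨cg, hcg⟩ := isCompact_univ.exists_bound_of_continuousOn hg.continuousOn
    obtain ⟨ch, hch⟩ := isCompact_univ.exists_bound_of_continuousOn hh.continuousOn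
    obtain ⟨cg', hcg'⟩ := isCompact_univ.exists_bound_of_continuousOn hg'.continuousOn
    obtain ⟨ch', hch'⟩ := isCompact_univ.exists_bound_of_continuousOn hh'.continuousOn
    refine ⟨|cg| + |ch| + |cg'| + |ch'|, by positivity, fun y => ?_, fun y => ?_⟩
    · have h1 : |g y| ≤ |cg| := by
        have := hcg y (Set.mem_univ y); rw [Real.norm_eq_abs] at this
        exact this.trans (le_abs_self cg)
      have h2 : |h y| ≤ |ch| := by
        have := hch y (Set.mem_univ y); rw [Real.norm_eq_abs] at this
        exact this.trans (le_abs_self ch)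
      have h3 := (hgh y).1
      have h4 := (hgh y).2
      have h5 := neg_abs_le (g y)
      have h6 := le_abs_self (h y)
      refine abs_le.mpr ⟨?_, ?_⟩
      · have := abs_nonneg cg'; have := abs_nonneg ch'; have := abs_nonneg ch
        linarith [abs_le.mp h1]
      · have := abs_nonneg cg'; have := abs_nonneg ch'; have := abs_nonneg cg
        linarith
    · have h1 : |g' y| ≤ |cg'| := by
        have := hcg' y (Set.mem_univ y); rw [Real.norm_eq_abs] at this
        exact this.trans (le_abs_self cg')
      have h2 : |h' y| ≤ |ch'| := by
        have := hch' y (Set.mem_univ y); rw [Real.norm_eq_abs] at this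
        exact this.trans (le_abs_self ch')
      have h3 := (hgh' y).1
      have h4 := (hgh' y).2
      have h6 := le_abs_self (h' y)
      refine abs_le.mpr ⟨?_, ?_⟩
      · have := abs_nonneg cg; have := abs_nonneg ch; have := abs_nonneg ch'
        linarith [abs_le.mp h1]
      · have := abs_nonneg cg; have := abs_nonneg ch; have := abs_nonneg cg'
        linarith
  choose c hc0 hcre hcim using hbd
  set C0 : ℝ := ∑ j, c j with hC0def
  have hC0nonneg : 0 ≤ C0 := Finset.sum_nonneg fun j _ => hc0 j
  have hcC0 : ∀ j, c j ≤ C0 := fun j =>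
    Finset.single_le_sum (fun j _ => hc0 j) (Finset.mem_univ j)
  set C : ℝ := 2 * C0 + 1 with hCdef
  have hC1 : 1 ≤ C := by simp only [hCdef]; linarith
  have hCpos : 0 < C := by linarith
  have hφb : ∀ j y, ‖φ j y‖ ≤ C := fun j y => (znorm_le _).trans (by
    have := hcre j y; have := hcim j y; have := hcC0 j
    simp only [hCdef]; linarith)
  rw [Metric.tendsto_nhds]
  intro ε hε
  set B : ℝ := C ^ s * s + 1 with hBdef
  have hPnn : (0:ℝ) ≤ C ^ s * s := by positivity
  have hB1 : 1 ≤ B := by simp only [hBdef]; linarith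
  have hBpos : 0 < B := by linarith
  set δ : ℝ := ε / (8 * B) with hδdef
  have hδpos : 0 < δ := div_pos hε (by linarith)
  choose ψ D hψc hDc hD0 hDle hψb hDint using fun j =>
    approx ν (φ j) (hφ j) C0 (fun y => (hcre j y).trans (hcC0 j))
      (fun y => (hcim j y).trans (hcC0 j)) δ hδpos
  have hψb' : ∀ j y, ‖ψ j y‖ ≤ C := fun j y => (hψb j y).trans (by
    simp only [hCdef]; linarith)
  set Aφ : ℕ → ℂ := fun K => (Mk K : ℂ)⁻¹ *
    ∑ m ∈ Finset.range (Mk K), ∏ j, φ j (a ((m : ℤ) + nn j)) with hAφ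
  set Aψ : ℕ → ℂ := fun K => (Mk K : ℂ)⁻¹ *
    ∑ m ∈ Finset.range (Mk K), ∏ j, ψ j (a ((m : ℤ) + nn j)) with hAψ
  set L : ℂ := ∫ x, ∏ j, φ j (x (nn j)) ∂μ with hL
  set Iψ : ℂ := ∫ x, ∏ j, ψ j (x (nn j)) ∂μ with hIψ
  set R : Fin s → ℕ → ℝ := fun j K => (Mk K : ℝ)⁻¹ *
    ∑ m ∈ Finset.range (Mk K), D j (a ((m : ℤ) + nn j)) with hRdef
  -- the averages of D j along the shifted sequence converge to ∫ D j dν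
  have hRt : ∀ j, Tendsto (R j) atTop (nhds (∫ y, D j y ∂ν)) := fun j =>
    shiftR a Mk hMk ν hν (D j) (hDc j) (nn j)
  have hRev : ∀ j, ∀ᶠ K in atTop, R j K < 3 * δ := fun j =>
    (hRt j).eventually_lt_const (lt_of_le_of_lt (hDint j) (by linarith))
  -- term 1 : pointwise comparison of the correlation averages for φ and ψ
  have hprodb : ∀ (b : Fin s → Y),
      ‖(∏ j, φ j (b j)) - ∏ j, ψ j (b j)‖ ≤ C ^ s * ∑ j, ‖φ j (b j) - ψ j (b j)‖ := by
    intro b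
    have := norm_prod_sub_prod_le' Finset.univ (fun j => φ j (b j)) (fun j => ψ j (b j))
      C hC1 (fun j _ => hφb j _) (fun j _ => hψb' j _)
    rwa [Finset.card_univ, Fintype.card_fin] at this
  have hterm1 : ∀ K, ‖Aφ K - Aψ K‖ ≤ C ^ s * ∑ j, R j K := by
    intro K
    have e : Aφ K - Aψ K = (Mk K : ℂ)⁻¹ * ∑ m ∈ Finset.range (Mk K),
        ((∏ j, φ j (a ((m : ℤ) + nn j))) - ∏ j, ψ j (a ((m : ℤ) + nn j))) := by
      simp only [hAφ, hAψ]
      rw [← mul_sub, ← Finset.sum_sub_distrib]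
    rw [e, norm_mul]
    have hninv : ‖((Mk K : ℂ))⁻¹‖ = (Mk K : ℝ)⁻¹ := by rw [norm_inv]; norm_num
    rw [hninv]
    have hs1 : ‖∑ m ∈ Finset.range (Mk K),
        ((∏ j, φ j (a ((m : ℤ) + nn j))) - ∏ j, ψ j (a ((m : ℤ) + nn j)))‖
        ≤ ∑ m ∈ Finset.range (Mk K), (C ^ s * ∑ j, D j (a ((m : ℤ) + nn j))) := by
      refine (norm_sum_le _ _).trans (Finset.sum_le_sum fun m _ => ?_)
      refine (hprodb fun j => a ((m : ℤ) + nn j)).trans ?_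
      exact mul_le_mul_of_nonneg_left
        (Finset.sum_le_sum fun j _ => hDle j _) (by positivity)
    refine (mul_le_mul_of_nonneg_left hs1 (by positivity)).trans_eq ?_
    have e2 : ∑ m ∈ Finset.range (Mk K), (C ^ s * ∑ j, D j (a ((m : ℤ) + nn j)))
        = C ^ s * ∑ j, ∑ m ∈ Finset.range (Mk K), D j (a ((m : ℤ) + nn j)) := by
      rw [← Finset.mul_sum, Finset.sum_comm]
    rw [e2]
    simp only [hRdef]
    rw [← Finset.mul_sum]
    ring
  -- term 2 : convergence of the ψ-correlations via hμ
  have hψF : Continuous fun x : ℤ → Y => ∏ j, ψ j (x (nn j)) :=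
    continuous_finset_prod _ fun j _ => (hψc j).comp (continuous_apply (nn j))
  have hT2 : Tendsto Aψ atTop (nhds Iψ) := by
    refine (hμ _ hψF).congr fun K => ?_
    simp only [hAψ]
    congr 1
    refine Finset.sum_congr rfl fun m _ => ?_
    refine Finset.prod_congr rfl fun j _ => ?_
    rw [add_comm]
  have hev2 : ∀ᶠ K in atTop, dist (Aψ K) Iψ < δ := Metric.tendsto_nhds.mp hT2 δ hδpos
  -- marginal identity : ∫ D j (x (nn j)) dμ = ∫ D j dν
  have hDμint : ∀ j, Integrable (fun x : ℤ → Y => D j (x (nn j))) μ := fun j =>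
    contIntR μ (D j) (hDc j) (fun x => x (nn j)) (measurable_pi_apply _)
  have hmarg : ∀ j, (∫ x, D j (x (nn j)) ∂μ) = ∫ y, D j y ∂ν := by
    intro j
    have h1 := hμ (fun x => ((D j (x (nn j)) : ℝ) : ℂ))
      (Complex.continuous_ofReal.comp ((hDc j).comp (continuous_apply (nn j))))
    have h2 := shiftC a Mk hMk ν hν (fun y => ((D j y : ℝ) : ℂ))
      (Complex.continuous_ofReal.comp (hDc j)) (nn j)
    have h3 : (fun K => (Mk K : ℂ)⁻¹ * ∑ m ∈ Finset.range (Mk K),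
          ((D j (a (nn j + (m : ℤ))) : ℝ) : ℂ))
        = fun K => (Mk K : ℂ)⁻¹ * ∑ m ∈ Finset.range (Mk K),
          ((D j (a ((m : ℤ) + nn j)) : ℝ) : ℂ) := by
      funext K
      congr 1
      exact Finset.sum_congr rfl fun m _ => by rw [add_comm]
    rw [h3] at h1
    have h4 := tendsto_nhds_unique h1 h2
    have e1 : (∫ x, ((D j (x (nn j)) : ℝ) : ℂ) ∂μ)
        = ((∫ x, D j (x (nn j)) ∂μ : ℝ) : ℂ) := integral_ofReal
    have e2 : (∫ y, ((D j y : ℝ) : ℂ) ∂ν) = ((∫ y, D j y ∂ν : ℝ) : ℂ) := integral_ofReal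
    rw [e1, e2] at h4
    exact_mod_cast h4
  -- integrability of the products
  have hprodnorm : ∀ (u : Fin s → ℂ), (∀ j, ‖u j‖ ≤ C) → ‖∏ j, u j‖ ≤ C ^ s := by
    intro u hu
    refine (Finset.norm_prod_le _ _).trans ?_
    calc (∏ j, ‖u j‖) ≤ ∏ _j : Fin s, C :=
          Finset.prod_le_prod (fun _ _ => norm_nonneg _) (fun j _ => hu j)
      _ = C ^ s := by rw [Finset.prod_const, Finset.card_univ, Fintype.card_fin]
  have hPφint : Integrable (fun x : ℤ → Y => ∏ j, φ j (x (nn j))) μ := by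
    have hm : Measurable fun x : ℤ → Y => ∏ j, φ j (x (nn j)) :=
      Finset.measurable_prod _ fun j _ => (hφ j).1.comp (measurable_pi_apply _)
    exact Integrable.mono' (integrable_const (C ^ s)) hm.aestronglyMeasurable
      (Filter.Eventually.of_forall fun x => hprodnorm _ fun j => hφb j _)
  have hPψint : Integrable (fun x : ℤ → Y => ∏ j, ψ j (x (nn j))) μ := by
    have hm : Measurable fun x : ℤ → Y => ∏ j, ψ j (x (nn j)) :=
      Finset.measurable_prod _ fun j _ => ((hψc j).measurable).comp (measurable_pi_apply _)
    exact Integrable.mono' (integrable_const (C ^ s)) hm.aestronglyMeasurable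
      (Filter.Eventually.of_forall fun x => hprodnorm _ fun j => hψb' j _)
  -- term 3 : comparing the two integrals
  have hterm3 : ‖Iψ - L‖ ≤ C ^ s * ((s : ℝ) * (2 * δ)) := by
    have e : Iψ - L = ∫ x, ((∏ j, ψ j (x (nn j))) - ∏ j, φ j (x (nn j))) ∂μ := by
      simp only [hIψ, hL]
      rw [integral_sub hPψint hPφint]
    rw [e]
    refine (norm_integral_le_integral_norm _).trans ?_
    have hbnd : ∀ x : ℤ → Y, ‖(∏ j, ψ j (x (nn j))) - ∏ j, φ j (x (nn j))‖
        ≤ C ^ s * ∑ j, D j (x (nn j)) := by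
      intro x
      have h0 := norm_prod_sub_prod_le' Finset.univ (fun j => ψ j (x (nn j)))
        (fun j => φ j (x (nn j))) C hC1 (fun j _ => hψb' j _) (fun j _ => hφb j _)
      rw [Finset.card_univ, Fintype.card_fin] at h0
      refine h0.trans (mul_le_mul_of_nonneg_left
        (Finset.sum_le_sum fun j _ => ?_) (by positivity))
      rw [norm_sub_rev]
      exact hDle j _
    have hint2 : Integrable (fun x : ℤ → Y => C ^ s * ∑ j, D j (x (nn j))) μ :=
      (integrable_finset_sum _ fun j _ => hDμint j).const_mul _
    calc (∫ x, ‖(∏ j, ψ j (x (nn j))) - ∏ j, φ j (x (nn j))‖ ∂μ)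
        ≤ ∫ x, (C ^ s * ∑ j, D j (x (nn j))) ∂μ :=
          integral_mono (Integrable.norm (hPψint.sub hPφint)) hint2 hbnd
      _ = C ^ s * ∑ j, ∫ x, D j (x (nn j)) ∂μ := by
          rw [integral_const_mul, integral_finset_sum _ fun j _ => hDμint j]
      _ ≤ C ^ s * ((s : ℝ) * (2 * δ)) := by
          refine mul_le_mul_of_nonneg_left ?_ (by positivity)
          calc (∑ j, ∫ x, D j (x (nn j)) ∂μ) = ∑ j, ∫ y, D j y ∂ν :=
                Finset.sum_congr rfl fun j _ => hmarg j
            _ ≤ ∑ _j : Fin s, (2 * δ) := Finset.sum_le_sum fun j _ => hDint j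
            _ = (s : ℝ) * (2 * δ) := by
                rw [Finset.sum_const, Finset.card_univ, Fintype.card_fin, nsmul_eq_mul]
  -- combine everything
  filter_upwards [eventually_all.mpr hRev, hev2] with K hK1 hK2
  have hd : dist (Aφ K) L ≤ ‖Aφ K - Aψ K‖ + dist (Aψ K) Iψ + ‖Iψ - L‖ := by
    simpa [dist_eq_norm] using dist_triangle4 (Aφ K) (Aψ K) Iψ L
  have h1 : ‖Aφ K - Aψ K‖ ≤ C ^ s * ((s : ℝ) * (3 * δ)) := by
    refine (hterm1 K).trans (mul_le_mul_of_nonneg_left ?_ (by positivity))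
    calc (∑ j, R j K) ≤ ∑ _j : Fin s, (3 * δ) :=
          Finset.sum_le_sum fun j _ => (hK1 j).le
      _ = (s : ℝ) * (3 * δ) := by
          rw [Finset.sum_const, Finset.card_univ, Fintype.card_fin, nsmul_eq_mul]
  have hPB : C ^ s * (s : ℝ) = B - 1 := by simp only [hBdef]; ring
  have hεδ : ε = δ * (8 * B) := by
    simp only [hδdef]
    field_simp
  have htot : dist (Aφ K) L ≤ C ^ s * ((s : ℝ) * (3 * δ)) + δ
      + C ^ s * ((s : ℝ) * (2 * δ)) := by
    have := hK2.le
    linarith [hd, h1, hterm3]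
  have : C ^ s * ((s : ℝ) * (3 * δ)) + δ + C ^ s * ((s : ℝ) * (2 * δ))
      = (5 * (B - 1) + 1) * δ := by
    rw [← hPB]; ring
  rw [this] at htot
  refine lt_of_le_of_lt htot ?_
  rw [hεδ]
  nlinarith [mul_pos (show (0:ℝ) < 3 * B + 4 by linarith) hδpos]
end
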